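/- Let a be a nonzero compact element of a multiplicative lattice Q, and let κ(a) = ⋁{ k | a ≰ k }. Then a is completely strongly hollow if and only if a ≰ κ(a). -/

import Mathlib

/-- A multiplicative lattice: a complete lattice with a commutative, associative
multiplication distributing over arbitrary joins, with the top element as identity. -/
class MulLattice (Q : Type*) extends CompleteLattice Q, CommMonoid Q where
  mul_sSup : ∀ (a : Q) (s : Set Q), a * sSup s = ⨆ x ∈ s, a * x
  one_eq_top : (1 : Q) = ⊤

section OrderDefs
variable {Q : Type*} [CompleteLattice Q]

/-- `a` is strongly hollow if `a ≤ j ⊔ k` implies `a ≤ j` or `a ≤ k`. -/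
def StronglyHollow (a : Q) : Prop := ∀ j k : Q, a ≤ j ⊔ k → a ≤ j ∨ a ≤ k

/-- `a` is completely strongly hollow if whenever `a` is below an arbitrary join,
it is below one of the joinands. -/
def CompletelyStronglyHollow (a : Q) : Prop :=
  ∀ s : Set Q, a ≤ sSup s → ∃ x ∈ s, a ≤ x

/-- `κ(a)` is the join of all elements not above `a`. -/
def kappa (a : Q) : Q := sSup {k : Q | ¬ a ≤ k}

end OrderDefs

/-- The mlResidual `(a : b)`. -/
def mlResidual {Q : Type*} [MulLattice Q] (a b : Q) : Q := sSup {x : Q | x * b ≤ a}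

namespace CompleteLattice

/-- The December 2024 Mathlib definition of a compact element (since replaced in Mathlib by
the root-level `IsCompactElement`, stated with directed sets over a partial order). -/
def IsCompactElement {α : Type*} [CompleteLattice α] (k : α) :=
  ∀ s : Set α, k ≤ sSup s → ∃ t : Finset α, ↑t ⊆ s ∧ k ≤ t.sup id

end CompleteLattice

theorem completelyStronglyHollow_iff_not_le_kappa {Q : Type*} [CompleteLattice Q] (a : Q) :
    CompletelyStronglyHollow a ↔ ¬ a ≤ kappa a := by
  refine ⟨fun h ha => ?_, fun h s hs => ?_⟩
  · obtain ⟨k, hk, hak⟩ := h _ ha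
    exact hk hak
  · by_contra! hnot
    exact h (hs.trans (sSup_le_sSup hnot))

theorem stmt7_general {Q : Type*} [MulLattice Q] (a : Q) :
    CompletelyStronglyHollow a ↔ ¬ a ≤ kappa a :=
  completelyStronglyHollow_iff_not_le_kappa a

theorem stmt7 {Q : Type*} [MulLattice Q] (a : Q) (ha : a ≠ ⊥)
    (hcomp : CompleteLattice.IsCompactElement a) :
    CompletelyStronglyHollow a ↔ ¬ a ≤ kappa a :=
  stmt7_general a
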